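/- For the Cramér–Lundberg process with Laplace exponent ψ(φ) = μφ − βφ/(ρ+φ) and r > 0, letting Φ and ζ be the two roots of ψ(φ) = r given by Φ = ((β+r−μρ) + √((β+r−μρ)² + 4rμρ))/(2μ) and ζ = ((β+r−μρ) − √((β+r−μρ)² + 4rμρ))/(2μ), the function W^{(r)}(u) = e^{Φu}/ψ'(Φ) + e^{ζu}/ψ'(ζ) satisfies ∫_0^∞ e^{-φu} W^{(r)}(u) du = 1/(ψ(φ) − r) for all φ > Φ. -/

import Mathlib

open MeasureTheory Set Real

/-- Laplace transform of the constant function 1: `∫_0^∞ e^{-bx} dx = 1/b` for `b > 0`. -/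
lemma integral_exp_neg_mul_Ioi_zero {b : ℝ} (hb : 0 < b) :
    ∫ x in Set.Ioi (0:ℝ), Real.exp (-b * x) = 1 / b := by
  have hderiv : ∀ x ∈ Set.Ici (0:ℝ),
      HasDerivAt (fun x : ℝ => -Real.exp (-b * x) / b) (Real.exp (-b * x)) x := by
    intro x _
    have h1 : HasDerivAt (fun x : ℝ => -b * x) (-b) x := by
      simpa using (hasDerivAt_id x).const_mul (-b)
    have h2 := (h1.exp.neg).div_const b
    convert h2 using 1
    all_goals first | rfl | (rw [eq_div_iff hb.ne']; ring)
  have htend : Filter.Tendsto (fun x : ℝ => -Real.exp (-b * x) / b)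
      Filter.atTop (nhds 0) := by
    have : Filter.Tendsto (fun x : ℝ => -Real.exp (-b * x) / b)
        Filter.atTop (nhds (-0 / b)) := by
      refine Filter.Tendsto.div_const (Filter.Tendsto.neg ?_) _
      exact Real.tendsto_exp_atBot.comp
        (Filter.tendsto_id.const_mul_atTop_of_neg (neg_neg_iff_pos.2 hb))
    simpa using this
  have := integral_Ioi_of_hasDerivAt_of_tendsto' hderiv
    (exp_neg_integrableOn_Ioi 0 hb) htend
  simp only [mul_zero, neg_zero, Real.exp_zero] at this
  rw [this]
  field_simp
  ring

/-- For the Cramér–Lundberg process with exponential jumps, the scale function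
`W^{(r)}(u) = e^{Φu}/ψ'(Φ) + e^{ζu}/ψ'(ζ)` has Laplace transform `1/(ψ(φ) - r)`
for `φ > Φ`. -/
theorem scale_function_cramer_lundberg_laplace
    (μ β ρ r : ℝ) (hμ : 0 < μ) (hβ : 0 < β) (hρ : 0 < ρ) (hr : 0 < r)
    (hdisc : 0 < (β + r - μ*ρ)^2 + 4*r*μ*ρ)
    (ψ ψ' : ℝ → ℝ)
    (hψ : ∀ φ : ℝ, ψ φ = μ * φ - β * φ / (ρ + φ))
    (hψ' : ∀ φ : ℝ, ψ' φ = μ - β * ρ / (ρ + φ)^2)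
    (Φ ζ : ℝ)
    (hΦ : Φ = ((β + r - μ*ρ) + Real.sqrt ((β + r - μ*ρ)^2 + 4*r*μ*ρ)) / (2*μ))
    (hζ : ζ = ((β + r - μ*ρ) - Real.sqrt ((β + r - μ*ρ)^2 + 4*r*μ*ρ)) / (2*μ))
    (hΦroot : ψ Φ = r) (hζroot : ψ ζ = r)
    (hΦne : ψ' Φ ≠ 0) (hζne : ψ' ζ ≠ 0)
    (W : ℝ → ℝ)
    (hW : ∀ u : ℝ, W u = Real.exp (Φ * u) / ψ' Φ + Real.exp (ζ * u) / ψ' ζ) :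
    ∀ φ : ℝ, Φ < φ →
      ∫ u in Set.Ioi (0:ℝ), Real.exp (-φ * u) * W u = 1 / (ψ φ - r) := by
  intro φ hφ
  set s := Real.sqrt ((β + r - μ*ρ)^2 + 4*r*μ*ρ) with hs_def
  have hs : 0 < s := Real.sqrt_pos.2 hdisc
  have hss : s^2 = (β + r - μ*ρ)^2 + 4*r*μ*ρ := Real.sq_sqrt hdisc.le
  -- Vieta
  have hsum : μ * (Φ + ζ) = β + r - μ*ρ := by
    rw [hΦ, hζ]; field_simp; ring
  have hprod : μ * (Φ * ζ) = -(r*ρ) := by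
    rw [hΦ, hζ]
    field_simp
    nlinarith [hss]
  -- positivity facts
  have hΦpos : 0 < Φ := by
    rw [hΦ]
    apply div_pos _ (by linarith)
    nlinarith [hss, hs, mul_pos (mul_pos hr hμ) hρ]
  have hρΦ : 0 < ρ + Φ := by linarith
  have hρζ : 0 < ρ + ζ := by
    have h2 : s < β + r + μ*ρ := by
      nlinarith [hss, hs, mul_pos hμ hρ, mul_pos (mul_pos hμ hρ) hβ]
    have : ρ + ζ = (2*μ*ρ + ((β + r - μ*ρ) - s)) / (2*μ) := by
      rw [hζ]; field_simp
    rw [this]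
    apply div_pos _ (by linarith)
    linarith
  have hζΦ : ζ < Φ := by
    rw [hΦ, hζ, div_lt_div_iff_of_pos_right (by linarith : (0:ℝ) < 2*μ)]
    linarith
  have hφΦ : 0 < φ - Φ := by linarith
  have hφζ : 0 < φ - ζ := by linarith
  have hρφ : 0 < ρ + φ := by linarith
  -- closed forms of the derivatives
  have hdΦ : ψ' Φ = μ * (Φ - ζ) / (ρ + Φ) := by
    rw [hψ']
    have h1 : (ρ+Φ) ≠ 0 := hρΦ.ne'
    field_simp
    linear_combination ρ*hsum + hprod
  have hdζ : ψ' ζ = μ * (ζ - Φ) / (ρ + ζ) := by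
    rw [hψ']
    have h1 : (ρ+ζ) ≠ 0 := hρζ.ne'
    field_simp
    linear_combination ρ*hsum + hprod
  -- factorization of ψ φ - r
  have hfact : ψ φ - r = μ * (φ - Φ) * (φ - ζ) / (ρ + φ) := by
    rw [hψ]
    have h1 : (ρ+φ) ≠ 0 := hρφ.ne'
    field_simp
    linear_combination φ*hsum - hprod
  -- the integral
  have hcong : ∀ u ∈ Set.Ioi (0:ℝ), Real.exp (-φ*u) * W u
      = Real.exp (-(φ-Φ)*u) * (1/ψ' Φ) + Real.exp (-(φ-ζ)*u) * (1/ψ' ζ) := by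
    intro u _
    rw [hW u, mul_add, div_eq_mul_inv, div_eq_mul_inv, ← mul_assoc, ← mul_assoc,
      ← Real.exp_add, ← Real.exp_add,
      show -φ*u + Φ*u = -(φ-Φ)*u from by ring,
      show -φ*u + ζ*u = -(φ-ζ)*u from by ring, one_div, one_div]
  rw [setIntegral_congr_fun measurableSet_Ioi hcong,
    integral_add ((exp_neg_integrableOn_Ioi 0 hφΦ).mul_const _)
      ((exp_neg_integrableOn_Ioi 0 hφζ).mul_const _),
    integral_mul_const, integral_mul_const,
    integral_exp_neg_mul_Ioi_zero hφΦ, integral_exp_neg_mul_Ioi_zero hφζ,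
    hfact, hdΦ, hdζ]
  have h2 : (Φ - ζ) ≠ 0 := (sub_pos.2 hζΦ).ne'
  have h3 : (ζ - Φ) ≠ 0 := sub_ne_zero.2 hζΦ.ne
  have h4 : (φ - Φ) ≠ 0 := hφΦ.ne'
  have h5 : (φ - ζ) ≠ 0 := hφζ.ne'
  have h6 : (ρ + φ) ≠ 0 := hρφ.ne'
  have h7 : (ρ + Φ) ≠ 0 := hρΦ.ne'
  have h8 : (ρ + ζ) ≠ 0 := hρζ.ne'
  field_simp
  ring
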